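/- arXiv:1907.09777 — 6 statements merged into one kernel-verified Lean document; each statement's English description precedes it below -/
import Mathlib

section
/- Let θ>0, γ>0 with θ < 2^{-γ}, let R₀>0, C>0, and let L : (R₀,∞) → ℝ be nonnegative and nondecreasing with L(R) ≤ θ·L(2R) + G(R) and L(R) ≤ C·R^γ for all R > R₀, where G : (R₀,∞) → [0,∞) satisfies G(R) → 0 as R → ∞. Then L(R) = 0 for all R > R₀. -/
theorem stmt_3 (θ γ R₀ C : ℝ) (hθ : 0 < θ) (hγ : 0 < γ) (hθγ : θ < 2 ^ (-γ))
    (hR₀ : 0 < R₀) (hC : 0 < C) (L G : ℝ → ℝ)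
    (hLnonneg : ∀ R, R₀ < R → 0 ≤ L R)
    (hLmono : ∀ R₁ R₂, R₀ < R₁ → R₁ ≤ R₂ → L R₁ ≤ L R₂)
    (hGnonneg : ∀ R, R₀ < R → 0 ≤ G R)
    (hrec : ∀ R, R₀ < R → L R ≤ θ * L (2 * R) + G R)
    (hgrowth : ∀ R, R₀ < R → L R ≤ C * R ^ γ)
    (hGlim : Filter.Tendsto G Filter.atTop (nhds 0)) :
    ∀ R, R₀ < R → L R = 0 := by
  intro R hR
  have h2γ : (0:ℝ) < (2:ℝ) ^ γ := Real.rpow_pos_of_pos (by norm_num) γ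
  have hq1 : θ * (2:ℝ) ^ γ < 1 := by
    have : θ < ((2:ℝ) ^ γ)⁻¹ := by rwa [Real.rpow_neg (by norm_num)] at hθγ
    calc θ * (2:ℝ) ^ γ < ((2:ℝ)^γ)⁻¹ * (2:ℝ)^γ := by
          exact mul_lt_mul_of_pos_right this h2γ
      _ = 1 := inv_mul_cancel₀ (ne_of_gt h2γ)
  have hθ1 : θ < 1 := by
    have h1 : (1:ℝ) ≤ (2:ℝ) ^ γ := Real.one_le_rpow (by norm_num) hγ.le
    nlinarith
  -- main estimate: L R ≤ ε * (1-θ)⁻¹ for all ε > 0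
  have key : ∀ ε : ℝ, 0 < ε → L R ≤ ε * (1 - θ)⁻¹ := by
    intro ε hε
    obtain ⟨N, hN⟩ := Metric.tendsto_atTop.mp hGlim ε hε
    set R' : ℝ := max N R with hR'def
    have hRR' : R ≤ R' := le_max_right _ _
    have hR' : R₀ < R' := lt_of_lt_of_le hR hRR'
    have hR'pos : 0 < R' := lt_trans hR₀ hR'
    have hGsmall : ∀ S : ℝ, R' ≤ S → G S ≤ ε := by
      intro S hS
      have := hN S (le_trans (le_max_left _ _) hS)
      rw [Real.dist_eq, sub_zero] at this
      exact le_of_lt (lt_of_abs_lt this)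
    have hpow : ∀ n : ℕ, R' ≤ 2 ^ n * R' := by
      intro n
      have : (1:ℝ) ≤ 2 ^ n := one_le_pow₀ (by norm_num : (1:ℝ) ≤ 2)
      nlinarith
    have hpos : ∀ n : ℕ, R₀ < 2 ^ n * R' := fun n => lt_of_lt_of_le hR' (hpow n)
    -- induction
    have iter : ∀ n : ℕ, L R' ≤ θ ^ n * L (2 ^ n * R') + ε * ∑ k ∈ Finset.range n, θ ^ k := by
      intro n
      induction n with
      | zero => simp
      | succ n ih =>
        have h1 : L (2 ^ n * R') ≤ θ * L (2 ^ (n+1) * R') + ε := by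
          have := hrec (2 ^ n * R') (hpos n)
          have h2 : (2:ℝ) * (2 ^ n * R') = 2 ^ (n+1) * R' := by ring
          rw [h2] at this
          exact le_trans this (by
            have := hGsmall (2 ^ n * R') (hpow n)
            linarith)
        calc L R' ≤ θ ^ n * L (2 ^ n * R') + ε * ∑ k ∈ Finset.range n, θ ^ k := ih
          _ ≤ θ ^ n * (θ * L (2 ^ (n+1) * R') + ε) + ε * ∑ k ∈ Finset.range n, θ ^ k := by
              have hθn : (0:ℝ) ≤ θ ^ n := pow_nonneg hθ.le n
              nlinarith [mul_le_mul_of_nonneg_left h1 hθn]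
          _ = θ ^ (n+1) * L (2 ^ (n+1) * R') + ε * ∑ k ∈ Finset.range (n+1), θ ^ k := by
              rw [Finset.sum_range_succ]; ring
    -- growth bound
    set q : ℝ := θ * (2:ℝ) ^ γ with hqdef
    have hq0 : 0 ≤ q := mul_nonneg hθ.le h2γ.le
    have hbound : ∀ n : ℕ, L R' ≤ C * R' ^ γ * q ^ n + ε * ∑ k ∈ Finset.range n, θ ^ k := by
      intro n
      refine le_trans (iter n) ?_
      have h1 : L (2 ^ n * R') ≤ C * (2 ^ n * R') ^ γ := hgrowth _ (hpos n)
      have h2 : θ ^ n * L (2 ^ n * R') ≤ θ ^ n * (C * (2 ^ n * R') ^ γ) :=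
        mul_le_mul_of_nonneg_left h1 (pow_nonneg hθ.le n)
      have h3 : θ ^ n * (C * (2 ^ n * R') ^ γ) = C * R' ^ γ * q ^ n := by
        have hb : ((2:ℝ) ^ n * R') ^ γ = ((2:ℝ)^γ)^n * R' ^ γ := by
          rw [Real.mul_rpow (by positivity) hR'pos.le]
          congr 1
          rw [← Real.rpow_natCast (2:ℝ) n, ← Real.rpow_natCast ((2:ℝ)^γ) n,
            ← Real.rpow_mul (by norm_num), ← Real.rpow_mul (by norm_num)]
          ring_nf
        rw [hb, hqdef, mul_pow]
        ring
      linarith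
    -- take limit
    have hqlim : Filter.Tendsto (fun n : ℕ => C * R' ^ γ * q ^ n + ε * ∑ k ∈ Finset.range n, θ ^ k)
        Filter.atTop (nhds (C * R' ^ γ * 0 + ε * (1 - θ)⁻¹)) := by
      refine Filter.Tendsto.add ?_ ?_
      · exact (tendsto_pow_atTop_nhds_zero_of_lt_one hq0 hq1).const_mul _
      · exact ((hasSum_geometric_of_lt_one hθ.le hθ1).tendsto_sum_nat).const_mul _
    have : L R' ≤ C * R' ^ γ * 0 + ε * (1 - θ)⁻¹ :=
      ge_of_tendsto' hqlim hbound
    calc L R ≤ L R' := hLmono R R' hR hRR'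
      _ ≤ ε * (1 - θ)⁻¹ := by linarith
  have hle : L R ≤ 0 := by
    by_contra h
    push_neg at h
    have hδ : 0 < L R * (1 - θ) / 2 := by
      have : 0 < 1 - θ := by linarith
      positivity
    have := key _ hδ
    have h1θ : 0 < 1 - θ := by linarith
    have h3 : L R * (1 - θ) / 2 * (1 - θ)⁻¹ = L R / 2 := by field_simp
    rw [h3] at this
    linarith
  exact le_antisymm hle (hLnonneg R hR)
end

section
/- Define F₁(u,v) = −u(1−u²−v²) − v(ω−αuv) and F₂(u,v) = −v(1−u²−v²) − u(ω−αuv). Let α>0, ω>0, 2ω<α, and let (a,b) be the pair with 0<a<b, a²+b²=1, ab=ω/α. If a ≤ v ≤ b, then F₁(b,v) ≥ 0 and F₁(a,v) ≤ 0; and if a ≤ u ≤ b, then F₂(u,a) ≤ 0 and F₂(u,b) ≥ 0. -/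
theorem stmt_4 (α ω a b : ℝ) (hα : 0 < α) (hω : 0 < ω) (hcond : 2 * ω < α)
    (ha : 0 < a) (hab : a < b) (h1 : a ^ 2 + b ^ 2 = 1) (h2 : a * b = ω / α)
    (F₁ F₂ : ℝ → ℝ → ℝ)
    (hF₁ : ∀ u v, F₁ u v = -u * (1 - u ^ 2 - v ^ 2) - v * (ω - α * u * v))
    (hF₂ : ∀ u v, F₂ u v = -v * (1 - u ^ 2 - v ^ 2) - u * (ω - α * u * v)) :
    (∀ v, a ≤ v → v ≤ b → F₁ b v ≥ 0 ∧ F₁ a v ≤ 0) ∧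
    (∀ u, a ≤ u → u ≤ b → F₂ u a ≤ 0 ∧ F₂ u b ≥ 0) := by
  have hb : 0 < b := lt_trans ha hab
  have hω' : ω = α * (a * b) := by
    field_simp at h2; linarith [h2]
  constructor
  · intro v hav hvb
    constructor
    · rw [hF₁]
      nlinarith [mul_nonneg (sub_nonneg.2 hav) (mul_pos hb (by nlinarith : (0:ℝ) < a + v + α * v)).le]
    · rw [hF₁]
      nlinarith [mul_nonneg (sub_nonneg.2 hvb) (mul_pos ha (by nlinarith : (0:ℝ) < b + v + α * v)).le]
  · intro u hau hub
    constructor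
    · rw [hF₂]
      nlinarith [mul_nonneg (sub_nonneg.2 hub) (mul_pos ha (by nlinarith : (0:ℝ) < b + u + α * u)).le]
    · rw [hF₂]
      nlinarith [mul_nonneg (sub_nonneg.2 hau) (mul_pos hb (by nlinarith : (0:ℝ) < a + u + α * u)).le]
end

section
/- Let α>0, ω>0 with 2ω<α. With h₁(t) = (1/2)(1 + sqrt(1 − 8αt² + 8ωt)) and h₂(t) = ωt/((α+2)t − 2), the derivative of t ↦ h₁(h₂(t)) is strictly less than 1 for all t > 1. Consequently the inequality t ≤ h₁(h₂(t)) has no solution with t > 1. -/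
/-!
For `t > 1` put `x = h₂ t`. Since `(α + 2) t - 2 > α t`, we get `0 < x < ω / α`, so the radicand
`1 - 8 α x² + 8 ω x = 1 + 8 x (ω - α x)` exceeds `1`, while `|2 α x - ω| < ω`. The chain rule gives
`(h₁ ∘ h₂)' t = 4 ω (2 α x - ω) / (((α + 2) t - 2)² √(1 - 8 α x² + 8 ω x))`, whose numerator is
below `4 ω² < α²` and whose denominator is above `α²`. Finally `h₁ (h₂ 1) = 1`, so the mean value
theorem gives `h₁ (h₂ t) - 1 < t - 1`.
-/

open Set

namespace NoFixedPoint

variable {α ω : ℝ}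

noncomputable def h₁ (α ω x : ℝ) : ℝ := 1 / 2 * (1 + √(1 - 8 * α * x ^ 2 + 8 * ω * x))

noncomputable def h₂ (α ω t : ℝ) : ℝ := ω * t / ((α + 2) * t - 2)

theorem h₁_h₂_one (hα : α ≠ 0) : h₁ α ω (h₂ α ω 1) = 1 := by
  have hx : h₂ α ω 1 = ω / α := by
    rw [h₂]
    ring
  have hradicand : 1 - 8 * α * (ω / α) ^ 2 + 8 * ω * (ω / α) = 1 := by
    field_simp
    ring
  rw [h₁, hx, hradicand, Real.sqrt_one]
  norm_num

theorem one_lt_radicand {x : ℝ} (hx : 0 < x) (hαx : α * x < ω) :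
    1 < 1 - 8 * α * x ^ 2 + 8 * ω * x := by
  nlinarith [mul_pos hx (sub_pos.mpr hαx)]

theorem lt_h₂_denominator (hα : 0 < α) {t : ℝ} (ht : 1 < t) : α < (α + 2) * t - 2 := by
  nlinarith

theorem h₂_pos (hα : 0 < α) (hω : 0 < ω) {t : ℝ} (ht : 1 < t) : 0 < h₂ α ω t :=
  div_pos (by positivity) (hα.trans (lt_h₂_denominator hα ht))

theorem mul_h₂_lt (hα : 0 < α) (hω : 0 < ω) {t : ℝ} (ht : 1 < t) : α * h₂ α ω t < ω := by
  have hd := hα.trans (lt_h₂_denominator hα ht)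
  rw [h₂, mul_div_assoc', div_lt_iff₀ hd]
  nlinarith

theorem hasDerivAt_radicand (x : ℝ) :
    HasDerivAt (fun x => 1 - 8 * α * x ^ 2 + 8 * ω * x) (8 * (ω - 2 * α * x)) x :=
  ((((hasDerivAt_pow 2 x).const_mul (8 * α)).const_sub 1).add
    ((hasDerivAt_id x).const_mul (8 * ω))).congr_deriv (by ring)

theorem hasDerivAt_h₁ {x : ℝ} (hx : 0 < 1 - 8 * α * x ^ 2 + 8 * ω * x) :
    HasDerivAt (h₁ α ω) (2 * (ω - 2 * α * x) / √(1 - 8 * α * x ^ 2 + 8 * ω * x)) x := by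
  have hsqrt : √(1 - 8 * α * x ^ 2 + 8 * ω * x) ≠ 0 := by positivity
  refine ((((hasDerivAt_radicand x).sqrt hx.ne').const_add 1).const_mul (1 / 2)).congr_deriv ?_
  field_simp
  ring

theorem hasDerivAt_h₂ {t : ℝ} (ht : (α + 2) * t - 2 ≠ 0) :
    HasDerivAt (h₂ α ω) (-2 * ω / ((α + 2) * t - 2) ^ 2) t :=
  (((hasDerivAt_id t).const_mul ω).div
    (((hasDerivAt_id t).const_mul (α + 2)).sub_const 2) ht).congr_deriv (by simp only [id]; ring)

theorem hasDerivAt_h₁_comp_h₂ (hα : 0 < α) (hω : 0 < ω) {t : ℝ} (ht : 1 < t) :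
    HasDerivAt (fun s => h₁ α ω (h₂ α ω s))
      (2 * (ω - 2 * α * h₂ α ω t) / √(1 - 8 * α * h₂ α ω t ^ 2 + 8 * ω * h₂ α ω t) *
        (-2 * ω / ((α + 2) * t - 2) ^ 2)) t :=
  (hasDerivAt_h₁ (zero_lt_one.trans (one_lt_radicand (h₂_pos hα hω ht) (mul_h₂_lt hα hω ht)))).comp
    t (hasDerivAt_h₂ (hα.trans (lt_h₂_denominator hα ht)).ne')

theorem deriv_h₁_comp_h₂_lt_one (hω : 0 < ω) (hωα : 2 * ω < α) {t : ℝ} (ht : 1 < t) :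
    deriv (fun s => h₁ α ω (h₂ α ω s)) t < 1 := by
  have hα : 0 < α := by linarith
  rw [(hasDerivAt_h₁_comp_h₂ hα hω ht).deriv]
  set x := h₂ α ω t
  set d := (α + 2) * t - 2
  set S := √(1 - 8 * α * x ^ 2 + 8 * ω * x)
  have hx := h₂_pos hα hω ht
  have hαx := mul_h₂_lt hα hω ht
  have hd : α < d := lt_h₂_denominator hα ht
  have hd0 : 0 < d := hα.trans hd
  have hS : 1 < S := Real.lt_sqrt_of_sq_lt (by simpa using one_lt_radicand hx hαx)
  rw [show 2 * (ω - 2 * α * x) / S * (-2 * ω / d ^ 2) = 4 * ω * (2 * α * x - ω) / (d ^ 2 * S) by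
      field_simp
      ring,
    div_lt_one (by positivity)]
  calc 4 * ω * (2 * α * x - ω) < 4 * ω * ω := by gcongr; linarith
    _ < α ^ 2 := by nlinarith
    _ < d ^ 2 := by gcongr
    _ < d ^ 2 * S := lt_mul_of_one_lt_right (by positivity) hS

theorem continuousOn_h₁_comp_h₂ (hα : 0 < α) :
    ContinuousOn (fun s => h₁ α ω (h₂ α ω s)) (Ici 1) := by
  have hd : ∀ s ∈ Ici (1 : ℝ), (α + 2) * s - 2 ≠ 0 := fun s hs => by
    have : α + 2 ≤ (α + 2) * s := le_mul_of_one_le_right (by linarith) hs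
    linarith
  unfold h₁ h₂
  fun_prop (disch := assumption)

theorem h₁_h₂_lt_self (hω : 0 < ω) (hωα : 2 * ω < α) {t : ℝ} (ht : 1 < t) :
    h₁ α ω (h₂ α ω t) < t := by
  have hα : 0 < α := by linarith
  have hdiff : DifferentiableOn ℝ (fun s => h₁ α ω (h₂ α ω s)) (interior (Ici 1)) := by
    rw [interior_Ici]
    exact fun s hs => (hasDerivAt_h₁_comp_h₂ hα hω hs).differentiableAt.differentiableWithinAt
  have hderiv : ∀ s ∈ interior (Ici (1 : ℝ)), deriv (fun s => h₁ α ω (h₂ α ω s)) s < 1 := by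
    rw [interior_Ici]
    exact fun s hs => deriv_h₁_comp_h₂_lt_one hω hωα hs
  have hmvt := (convex_Ici 1).image_sub_lt_mul_sub_of_deriv_lt (continuousOn_h₁_comp_h₂ hα) hdiff
    hderiv 1 self_mem_Ici t ht.le ht
  rw [h₁_h₂_one hα.ne'] at hmvt
  linarith

end NoFixedPoint

open NoFixedPoint in
theorem stmt_12_general (α ω : ℝ) (hω : 0 < ω) (hcond : 2 * ω < α) :
    let h₁ : ℝ → ℝ := fun t => 1 / 2 * (1 + Real.sqrt (1 - 8 * α * t ^ 2 + 8 * ω * t))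
    let h₂ : ℝ → ℝ := fun t => ω * t / ((α + 2) * t - 2)
    (∀ t : ℝ, 1 < t → deriv (fun s => h₁ (h₂ s)) t < 1) ∧
    (∀ t : ℝ, 1 < t → ¬ t ≤ h₁ (h₂ t)) :=
  ⟨fun _ ht => deriv_h₁_comp_h₂_lt_one hω hcond ht,
    fun _ ht => not_le.mpr (h₁_h₂_lt_self hω hcond ht)⟩

theorem stmt_12 (α ω : ℝ) (hα : 0 < α) (hω : 0 < ω) (hcond : 2 * ω < α) :
    let h₁ : ℝ → ℝ := fun t => 1 / 2 * (1 + Real.sqrt (1 - 8 * α * t ^ 2 + 8 * ω * t))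
    let h₂ : ℝ → ℝ := fun t => ω * t / ((α + 2) * t - 2)
    (∀ t : ℝ, 1 < t → deriv (fun s => h₁ (h₂ s)) t < 1) ∧
    (∀ t : ℝ, 1 < t → ¬ t ≤ h₁ (h₂ t)) :=
  stmt_12_general α ω hω hcond
end

section
/- Let 0<α<2 and ω > 2α/(2−α). With h̃₁(t) = (1/2)(1 + ω + sqrt((1+ω)² − 8αt²)) and h₂(t) = ωt/((α+2)t − 2), for every t > 2(1+ω)/(2+α) one has d/dt [h̃₁(h₂(t))] < 2α/((2−α)ω) < 1. -/
/-!
By the chain rule the derivative at `t` is `(4αu/√D) · (2ω/d²)` with `u = h₂ t`, `d = (α+2)t − 2`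
and `D = (1+ω)² − 8αu²`. The hypothesis on `t` gives `d > 2ω` and `u(2+α) < 1+ω`; since
`(2+α)² − 8α = (2−α)²`, the latter yields `√D > u(2−α)`. Hence the first factor is below
`4α/(2−α)` and the second below `1/(2ω)`.
-/

theorem hasDerivAt_mul_div_affine (ω c b t : ℝ) (ht : c * t - b ≠ 0) :
    HasDerivAt (fun s => ω * s / (c * s - b)) (-(ω * b) / (c * t - b) ^ 2) t := by
  have hnum : HasDerivAt (fun s : ℝ => ω * s) ω t := by
    simpa using (hasDerivAt_id t).const_mul ω
  have hden : HasDerivAt (fun s : ℝ => c * s - b) c t := by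
    simpa using ((hasDerivAt_id t).const_mul c).sub_const b
  exact (hnum.div hden ht).congr_deriv (by ring)

theorem hasDerivAt_half_add_sqrt_sub_mul_sq (A B k x : ℝ) (hx : B - k * x ^ 2 ≠ 0) :
    HasDerivAt (fun y => 1 / 2 * (A + √(B - k * y ^ 2))) (-(k * x) / (2 * √(B - k * x ^ 2))) x := by
  have hin : HasDerivAt (fun y : ℝ => B - k * y ^ 2) (-(k * (2 * x))) x := by
    simpa using ((hasDerivAt_pow 2 x).const_mul k).const_sub B
  exact (((hin.sqrt hx).const_add A).const_mul (1 / 2 : ℝ)).congr_deriv (by ring)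

theorem mul_two_sub_lt_sqrt_sq_sub {α u M : ℝ} (hα₀ : -2 ≤ α) (hα₂ : α ≤ 2) (hu : 0 ≤ u)
    (huM : u * (2 + α) < M) : u * (2 - α) < √(M ^ 2 - 8 * α * u ^ 2) := by
  have h0 : 0 ≤ u * (2 + α) := mul_nonneg hu (by linarith)
  have hsq : (u * (2 + α)) ^ 2 < M ^ 2 := pow_lt_pow_left₀ huM h0 two_ne_zero
  rw [Real.lt_sqrt (mul_nonneg hu (by linarith))]
  nlinarith

theorem two_mul_lt_affine {α ω t : ℝ} (hα : 0 < α) (ht : 2 * (1 + ω) / (2 + α) < t) :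
    2 * ω < (α + 2) * t - 2 := by
  have := (div_lt_iff₀ (by linarith : (0 : ℝ) < 2 + α)).mp ht
  linarith

theorem pos_of_lt_affine {α ω t : ℝ} (hα : 0 < α) (hω : 0 < ω)
    (ht : 2 * (1 + ω) / (2 + α) < t) : 0 < t := by
  have : 0 < 2 * (1 + ω) / (2 + α) := by positivity
  linarith

theorem mul_div_affine_mul_lt {α ω t : ℝ} (hα : 0 < α) (hω : 0 < ω)
    (ht : 2 * (1 + ω) / (2 + α) < t) : ω * t / ((α + 2) * t - 2) * (2 + α) < 1 + ω := by
  have hd := two_mul_lt_affine hα ht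
  have ht0 := pos_of_lt_affine hα hω ht
  rw [div_mul_eq_mul_div, div_lt_iff₀ (by linarith)]
  nlinarith

theorem two_mul_div_lt_one {α ω : ℝ} (hα : 0 < α) (hα2 : α < 2) (hω : 2 * α / (2 - α) < ω) :
    2 * α / ((2 - α) * ω) < 1 := by
  have h2α : 0 < 2 - α := by linarith
  rw [div_lt_iff₀ h2α] at hω
  rw [div_lt_one (mul_pos h2α (by nlinarith))]
  linarith

theorem neg_div_mul_neg_div_sq_lt {α ω u d S : ℝ} (hα : 0 < α) (hα2 : α < 2) (hω : 0 < ω)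
    (hu : 0 < u) (hd : 2 * ω < d) (hS : u * (2 - α) < S) :
    -(8 * α * u) / (2 * S) * (-(ω * 2) / d ^ 2) < 2 * α / ((2 - α) * ω) := by
  have h2α : 0 < 2 - α := by linarith
  have hS0 : 0 < S := (mul_nonneg hu.le h2α.le).trans_lt hS
  have hfst : 4 * α * u / S < 4 * α / (2 - α) := by
    rw [div_lt_div_iff₀ hS0 h2α]
    nlinarith
  have hsnd : 2 * ω / d ^ 2 < 1 / (2 * ω) := by
    rw [div_lt_div_iff₀ (pow_pos (by linarith) 2) (by positivity)]
    nlinarith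
  calc -(8 * α * u) / (2 * S) * (-(ω * 2) / d ^ 2) = 4 * α * u / S * (2 * ω / d ^ 2) := by ring
    _ < 4 * α / (2 - α) * (1 / (2 * ω)) := mul_lt_mul'' hfst hsnd (by positivity) (by positivity)
    _ = 2 * α / ((2 - α) * ω) := by field_simp; ring

theorem stmt_14 (α ω : ℝ) (hα : 0 < α) (hα2 : α < 2) (hω : 2 * α / (2 - α) < ω) :
    let h₁ : ℝ → ℝ := fun t => 1 / 2 * (1 + ω + Real.sqrt ((1 + ω) ^ 2 - 8 * α * t ^ 2))
    let h₂ : ℝ → ℝ := fun t => ω * t / ((α + 2) * t - 2)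
    ∀ t : ℝ, 2 * (1 + ω) / (2 + α) < t →
      deriv (fun s => h₁ (h₂ s)) t < 2 * α / ((2 - α) * ω) ∧
      2 * α / ((2 - α) * ω) < 1 := by
  intro h₁ h₂ t ht
  have h2α : 0 < 2 - α := by linarith
  have hω0 : 0 < ω := (div_pos (by linarith) h2α).trans hω
  refine ⟨?_, two_mul_div_lt_one hα hα2 hω⟩
  set u := h₂ t
  have hd : 2 * ω < (α + 2) * t - 2 := two_mul_lt_affine hα ht
  have hu : 0 < u := div_pos (mul_pos hω0 (pos_of_lt_affine hα hω0 ht)) (by linarith)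
  have hsqrt : u * (2 - α) < √((1 + ω) ^ 2 - 8 * α * u ^ 2) :=
    mul_two_sub_lt_sqrt_sq_sub (by linarith) hα2.le hu.le (mul_div_affine_mul_lt hα hω0 ht)
  have hD : 0 < (1 + ω) ^ 2 - 8 * α * u ^ 2 :=
    Real.sqrt_pos.mp ((mul_nonneg hu.le h2α.le).trans_lt hsqrt)
  have hderiv := (hasDerivAt_half_add_sqrt_sub_mul_sq (1 + ω) _ (8 * α) u hD.ne').comp t
    (hasDerivAt_mul_div_affine ω (α + 2) 2 t (by linarith))
  rw [show deriv (fun s => h₁ (h₂ s)) t = _ from hderiv.deriv]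
  exact neg_div_mul_neg_div_sq_lt hα hα2 hω0 hu hd hsqrt
end

section
/- Let α>0, ω≥0 with 2ω<α and let b = sqrt((1 + sqrt(1−4ω²/α²))/2) (so b ≤ 1). Suppose v₁ : [R,∞) → ℝ is C², satisfies v₁'' ≥ v₁(v₁² − b²), b/√3 ≤ v₁ < b on [R,∞), and v₁(x) → b as x → ∞. Then there exists C > 0 such that b − v₁(x) ≥ (1/C)·e^{−b√2·x} for all sufficiently large x. -/
/-!
With `μ = b√2`, the gap `f = b - v₁` is a supersolution of the linearised equation
`w'' = μ² w`: from `v₁'' ≥ v₁ (v₁² - b²)` and `0 ≤ v₁` one gets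
`f'' ≤ v₁ (b² - v₁²) ≤ 2 b² f`. Comparing `f` with the decaying solution
`f(R) e^{-μ(x - R)}` by the maximum principle on `[R, ∞)` (both vanish at infinity)
gives the exponential lower bound.
-/

open Real Filter Set Topology

section MaximumPrinciple

variable {g : ℝ → ℝ} {μ R x : ℝ}

lemma hasDerivAt_exp_neg_mul_mul (hg : DifferentiableAt ℝ g x) :
    HasDerivAt (fun y => exp (-(μ * y)) * g y)
      (exp (-(2 * μ * x)) * (exp (μ * x) * (deriv g x - μ * g x))) x := by
  have hexp : HasDerivAt (fun y => exp (-(μ * y))) (exp (-(μ * x)) * -μ) x := by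
    simpa using ((hasDerivAt_id x).const_mul μ).neg.exp
  refine (hexp.mul hg.hasDerivAt).congr_deriv ?_
  rw [← mul_assoc, ← exp_add]
  ring_nf

lemma hasDerivAt_exp_mul_mul_deriv_sub (hg : DifferentiableAt ℝ g x)
    (hg' : DifferentiableAt ℝ (deriv g) x) :
    HasDerivAt (fun y => exp (μ * y) * (deriv g y - μ * g y))
      (exp (μ * x) * (deriv (deriv g) x - μ ^ 2 * g x)) x := by
  have hexp : HasDerivAt (fun y => exp (μ * y)) (exp (μ * x) * μ) x := by
    simpa using ((hasDerivAt_id x).const_mul μ).exp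
  refine (hexp.mul (hg'.hasDerivAt.sub (hg.hasDerivAt.const_mul μ))).congr_deriv ?_
  simp only [Pi.sub_apply]
  ring

lemma antitoneOn_exp_mul_mul_deriv_sub (hg : ContDiff ℝ 2 g)
    (hineq : ∀ x ∈ Ici R, deriv (deriv g) x ≤ μ ^ 2 * g x) :
    AntitoneOn (fun y => exp (μ * y) * (deriv g y - μ * g y)) (Ici R) := by
  have hd y := hasDerivAt_exp_mul_mul_deriv_sub (μ := μ) (hg.differentiable two_ne_zero y)
    (hg.differentiable_deriv_two y)
  refine antitoneOn_of_deriv_nonpos (convex_Ici R)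
    (fun y _ => (hd y).continuousAt.continuousWithinAt)
    (fun y _ => (hd y).differentiableAt.differentiableWithinAt) fun y hy => ?_
  rw [interior_Ici] at hy
  rw [(hd y).deriv]
  exact mul_nonpos_of_nonneg_of_nonpos (exp_pos _).le (sub_nonpos.2 (hineq y (mem_Ici.2 hy.le)))

/-- The quantity `u = e^{μy} (g' - μ g)` is antitone, and `(e^{-μy} g)' = e^{-2μy} u`: if
`u(x) ≥ 0` then `e^{-μy} g` increases on `[R, x]`, otherwise it decreases on `[x, ∞)` to `0`. -/
theorem nonneg_of_deriv_deriv_le_sq_mul (hμ : 0 < μ) (hg : ContDiff ℝ 2 g) (hgR : 0 ≤ g R)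
    (hineq : ∀ x ∈ Ici R, deriv (deriv g) x ≤ μ ^ 2 * g x) (hlim : Tendsto g atTop (𝓝 0)) :
    ∀ x ∈ Ici R, 0 ≤ g x := by
  intro x₁ hx₁
  set p := fun y => exp (-(μ * y)) * g y
  set u := fun y => exp (μ * y) * (deriv g y - μ * g y)
  have hu : AntitoneOn u (Ici R) := antitoneOn_exp_mul_mul_deriv_sub hg hineq
  have hp y : HasDerivAt p (exp (-(2 * μ * y)) * u y) y :=
    hasDerivAt_exp_neg_mul_mul (hg.differentiable two_ne_zero y)
  suffices 0 ≤ p x₁ from (mul_nonneg_iff_of_pos_left (exp_pos _)).1 this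
  rcases le_or_gt 0 (u x₁) with hux | hux
  · have hp_mono : MonotoneOn p (Icc R x₁) := by
      refine monotoneOn_of_deriv_nonneg (convex_Icc R x₁)
        (fun y _ => (hp y).continuousAt.continuousWithinAt)
        (fun y _ => (hp y).differentiableAt.differentiableWithinAt) fun y hy => ?_
      rw [interior_Icc] at hy
      rw [(hp y).deriv]
      exact mul_nonneg (exp_pos _).le (hux.trans (hu hy.1.le hx₁ hy.2.le))
    calc 0 ≤ p R := mul_nonneg (exp_pos _).le hgR
      _ ≤ p x₁ := hp_mono ⟨le_rfl, hx₁⟩ ⟨hx₁, le_rfl⟩ hx₁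
  · have hp_anti : AntitoneOn p (Ici x₁) := by
      refine antitoneOn_of_deriv_nonpos (convex_Ici x₁)
        (fun y _ => (hp y).continuousAt.continuousWithinAt)
        (fun y _ => (hp y).differentiableAt.differentiableWithinAt) fun y hy => ?_
      rw [interior_Ici] at hy
      rw [(hp y).deriv]
      exact mul_nonpos_of_nonneg_of_nonpos (exp_pos _).le
        ((hu hx₁ (mem_Ici.2 (hx₁.trans hy.le)) hy.le).trans hux.le)
    have hp_lim : Tendsto p atTop (𝓝 0) := by
      simpa using (tendsto_exp_neg_atTop_nhds_zero.comp (tendsto_id.const_mul_atTop hμ)).mul hlim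
    exact le_of_tendsto hp_lim (eventually_atTop.2 ⟨x₁, fun y hy => hp_anti self_mem_Ici hy hy⟩)

end MaximumPrinciple

theorem exp_mul_mul_le_of_deriv_deriv_le_sq_mul {f : ℝ → ℝ} {μ R : ℝ} (hμ : 0 < μ)
    (hf : ContDiff ℝ 2 f) (hineq : ∀ x ∈ Ici R, deriv (deriv f) x ≤ μ ^ 2 * f x)
    (hlim : Tendsto f atTop (𝓝 0)) :
    ∀ x ∈ Ici R, exp (μ * R) * f R * exp (-μ * x) ≤ f x := by
  set c := exp (μ * R) * f R
  set g := fun y => f y - c * exp (-μ * y)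
  have hE y : HasDerivAt (fun y => c * exp (-μ * y)) (-μ * (c * exp (-μ * y))) y :=
    (((hasDerivAt_id y).const_mul (-μ)).exp.const_mul c).congr_deriv (by simp only [id]; ring)
  have hg' y : HasDerivAt g (deriv f y + μ * (c * exp (-μ * y))) y :=
    ((hf.differentiable two_ne_zero y).hasDerivAt.sub (hE y)).congr_deriv (by ring)
  have hg'' y : HasDerivAt (deriv g) (deriv (deriv f) y - μ ^ 2 * (c * exp (-μ * y))) y := by
    rw [funext fun y => (hg' y).deriv]
    exact ((hf.differentiable_deriv_two y).hasDerivAt.add ((hE y).const_mul μ)).congr_deriv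
      (by ring)
  have hgR : g R = 0 := by
    have : exp (μ * R) * exp (-μ * R) = 1 := by rw [← exp_add, neg_mul, add_neg_cancel, exp_zero]
    simp only [g, c]
    rw [mul_right_comm, this, one_mul, sub_self]
  have hg_ineq : ∀ x ∈ Ici R, deriv (deriv g) x ≤ μ ^ 2 * g x := fun x hx => by
    rw [(hg'' x).deriv]
    linarith [hineq x hx]
  have hg_lim : Tendsto g atTop (𝓝 0) := by
    have hexp : Tendsto (fun y => exp (-μ * y)) atTop (𝓝 0) :=
      tendsto_exp_atBot.comp (tendsto_id.const_mul_atTop_of_neg (neg_neg_of_pos hμ))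
    simpa [g] using hlim.sub (hexp.const_mul c)
  exact fun x hx => sub_nonneg.1 <|
    nonneg_of_deriv_deriv_le_sq_mul hμ (hf.sub (by fun_prop)) hgR.ge hg_ineq hg_lim x hx

theorem stmt_15_general (α ω : ℝ)
    (R : ℝ) (v₁ : ℝ → ℝ) (hv₁ : ContDiff ℝ 2 v₁) :
    let b := Real.sqrt ((1 + Real.sqrt (1 - 4 * ω ^ 2 / α ^ 2)) / 2)
    (∀ x, R ≤ x → deriv (deriv v₁) x ≥ v₁ x * (v₁ x ^ 2 - b ^ 2)) →
    (∀ x, R ≤ x → b / Real.sqrt 3 ≤ v₁ x ∧ v₁ x < b) →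
    Filter.Tendsto v₁ Filter.atTop (nhds b) →
    ∃ C > (0 : ℝ), ∃ X : ℝ, ∀ x, X ≤ x →
      b - v₁ x ≥ 1 / C * Real.exp (-(b * Real.sqrt 2) * x) := by
  intro b hineq hbounds hlim
  have hb : 0 < b := sqrt_pos.2 (by positivity)
  have hsq : (b * √2) ^ 2 = 2 * b ^ 2 := by rw [mul_pow, sq_sqrt zero_le_two]; ring
  have hf_ineq : ∀ x ∈ Ici R, deriv (deriv (b - v₁ ·)) x ≤ (b * √2) ^ 2 * (b - v₁ x) := by
    intro x hx
    have hv : 0 ≤ v₁ x := (div_nonneg hb.le (sqrt_nonneg 3)).trans (hbounds x hx).1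
    rw [deriv_const_sub', deriv.fun_neg, hsq]
    -- 2b²(b - v) - v(b² - v²) = (b - v)²(2b + v)
    nlinarith [hineq x hx, mul_nonneg (sq_nonneg (b - v₁ x)) (by positivity : 0 ≤ 2 * b + v₁ x)]
  have hf_lim : Tendsto (b - v₁ ·) atTop (𝓝 0) := by
    simpa using (tendsto_const_nhds (x := b)).sub hlim
  have hR : 0 < b - v₁ R := sub_pos.2 (hbounds R le_rfl).2
  refine ⟨(exp (b * √2 * R) * (b - v₁ R))⁻¹, by positivity, R, fun x hx => ?_⟩
  rw [one_div, inv_inv]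
  exact exp_mul_mul_le_of_deriv_deriv_le_sq_mul (by positivity) (contDiff_const.sub hv₁)
    hf_ineq hf_lim x hx

theorem stmt_15 (α ω : ℝ) (hα : 0 < α) (hω : 0 ≤ ω) (hcond : 2 * ω < α)
    (R : ℝ) (v₁ : ℝ → ℝ) (hv₁ : ContDiff ℝ 2 v₁) :
    let b := Real.sqrt ((1 + Real.sqrt (1 - 4 * ω ^ 2 / α ^ 2)) / 2)
    (∀ x, R ≤ x → deriv (deriv v₁) x ≥ v₁ x * (v₁ x ^ 2 - b ^ 2)) →
    (∀ x, R ≤ x → b / Real.sqrt 3 ≤ v₁ x ∧ v₁ x < b) →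
    Filter.Tendsto v₁ Filter.atTop (nhds b) →
    ∃ C > (0 : ℝ), ∃ X : ℝ, ∀ x, X ≤ x →
      b - v₁ x ≥ 1 / C * Real.exp (-(b * Real.sqrt 2) * x) :=
  stmt_15_general α ω R v₁ hv₁
end

section
/- Let α>0, ω>0 with 2ω<α, let (a,b) satisfy 0<a<b, a²+b²=1, ab=ω/α, and let A = [[2b²+αa², −ω(2+α)/α], [−ω(2+α)/α, 2a²+αb²]]. Define μ = 2ω(α+2) / ( α( (α−2)·sqrt(1−4ω²/α²) + sqrt((α−2)² + 32ω²/α) ) ). Then μ > 0 and the vector (1, μ) is an eigenvector of A with eigenvalue λ₋² = (1/2)((α+2) − sqrt((α−2)² + 32ω²/α)). -/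
/-!
A symmetric matrix `!![p, -c; -c, q]` has the eigenvalue `(p + q - R) / 2`, where
`R ^ 2 = (p - q) ^ 2 + 4 c ^ 2`, with eigenvector `(1, 2c / (R - (p - q)))`. For `A`, `p + q = α + 2` and
`p - q = (2 - α)(b ^ 2 - a ^ 2)`, where `b ^ 2 - a ^ 2 = √((a ^ 2 + b ^ 2) ^ 2 - 4 (a b) ^ 2) = √(1 - 4 ω ^ 2 / α ^ 2)`.
So `μ` is the second entry of that eigenvector, and it is positive because
`√((α - 2) ^ 2 + 32 ω ^ 2 / α) > |α - 2|`.
-/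

theorem Matrix.mulVec_symm_two_eigenvector {K : Type*} [Field K] [NeZero (2 : K)] {p q c R : K} (hR : R ^ 2 = (p - q) ^ 2 + 4 * c ^ 2)
    (hRpq : R ≠ p - q) :
    (!![p, -c; -c, q] : Matrix (Fin 2) (Fin 2) K).mulVec ![1, 2 * c / (R - (p - q))] =
      ((p + q - R) / 2) • ![1, 2 * c / (R - (p - q))] := by
  have ht : R - (p - q) ≠ 0 := sub_ne_zero.mpr hRpq
  ext i
  fin_cases i <;>
    simp only [Fin.zero_eta, Fin.mk_one, Fin.isValue, Matrix.mulVec_cons, Matrix.mulVec_empty,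
      Pi.add_apply, Pi.smul_apply, Function.comp_apply, Matrix.cons_val_zero, Matrix.cons_val_one,
      Matrix.cons_val_fin_one, Matrix.head_cons, Matrix.tail_cons, one_smul, smul_eq_mul, add_zero,
      mul_neg, mul_one] <;>
    field_simp
  · linear_combination hR
  · ring

theorem Real.sqrt_one_sub_four_mul_sq_mul {a b : ℝ} (ha : 0 ≤ a) (hab : a ≤ b)
    (h : a ^ 2 + b ^ 2 = 1) : √(1 - 4 * (a * b) ^ 2) = b ^ 2 - a ^ 2 := by
  have hsq : 1 - 4 * (a * b) ^ 2 = (b ^ 2 - a ^ 2) ^ 2 := by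
    linear_combination (-(1 + a ^ 2 + b ^ 2)) * h
  rw [hsq, Real.sqrt_sq (by nlinarith)]

theorem Real.mul_add_sqrt_sq_add_pos {x s u : ℝ} (hs : s ^ 2 ≤ 1) (hu : 0 < u) :
    0 < x * s + √(x ^ 2 + u) := by
  have hlt : (x * s) ^ 2 < x ^ 2 + u := by nlinarith [sq_nonneg x]
  linarith [Real.neg_sqrt_lt_of_sq_lt hlt]

theorem stmt_18_general (α ω a b : ℝ) (hα : 0 < α) (hω : 0 < ω)
    (ha : 0 < a) (hab : a < b) (h1 : a ^ 2 + b ^ 2 = 1) (h2 : a * b = ω / α) :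
    let A : Matrix (Fin 2) (Fin 2) ℝ :=
      !![2 * b ^ 2 + α * a ^ 2, -(ω * (2 + α) / α);
         -(ω * (2 + α) / α), 2 * a ^ 2 + α * b ^ 2]
    let μ : ℝ := 2 * ω * (α + 2) /
      (α * ((α - 2) * Real.sqrt (1 - 4 * ω ^ 2 / α ^ 2) +
        Real.sqrt ((α - 2) ^ 2 + 32 * ω ^ 2 / α)))
    let lm : ℝ := 1 / 2 * ((α + 2) - Real.sqrt ((α - 2) ^ 2 + 32 * ω ^ 2 / α))
    0 < μ ∧ A.mulVec ![1, μ] = lm • ![1, μ] := by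
  intro A μ lm
  have hωα : ω ^ 2 / α ^ 2 = (a * b) ^ 2 := by rw [h2, div_pow]
  have hs : √(1 - 4 * ω ^ 2 / α ^ 2) = b ^ 2 - a ^ 2 := by
    rw [mul_div_assoc, hωα, Real.sqrt_one_sub_four_mul_sq_mul ha.le hab.le h1]
  set S := √((α - 2) ^ 2 + 32 * ω ^ 2 / α) with hS
  have hD : 0 < (α - 2) * (b ^ 2 - a ^ 2) + S :=
    Real.mul_add_sqrt_sq_add_pos (by nlinarith) (by positivity)
  have hpq : 2 * b ^ 2 + α * a ^ 2 - (2 * a ^ 2 + α * b ^ 2) = (2 - α) * (b ^ 2 - a ^ 2) := by ring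
  have hS2 : S ^ 2 = (2 * b ^ 2 + α * a ^ 2 - (2 * a ^ 2 + α * b ^ 2)) ^ 2
      + 4 * (ω * (2 + α) / α) ^ 2 := by
    have hba : (b ^ 2 - a ^ 2) ^ 2 = 1 - 4 * ω ^ 2 / α ^ 2 := by
      linear_combination (a ^ 2 + b ^ 2 + 1) * h1 + 4 * hωα
    rw [hpq, hS, Real.sq_sqrt (by positivity), mul_pow, hba]
    field_simp; ring
  have hμ : μ = 2 * (ω * (2 + α) / α) /
      (S - (2 * b ^ 2 + α * a ^ 2 - (2 * a ^ 2 + α * b ^ 2))) := by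
    simp only [μ, hs, ← hS, hpq]
    rw [div_eq_div_iff (mul_pos hα hD).ne' (by linarith)]
    field_simp; ring
  have hlm : lm = (α + 2 - S) / 2 := by simp only [lm]; ring
  refine ⟨hμ ▸ div_pos (by positivity) (by linarith), ?_⟩
  have key := Matrix.mulVec_symm_two_eigenvector hS2 (by linarith)
  rw [hμ, hlm]
  convert key using 3
  linear_combination -(2 + α) * h1

theorem stmt_18 (α ω a b : ℝ) (hα : 0 < α) (hω : 0 < ω) (hcond : 2 * ω < α)
    (ha : 0 < a) (hab : a < b) (h1 : a ^ 2 + b ^ 2 = 1) (h2 : a * b = ω / α) :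
    let A : Matrix (Fin 2) (Fin 2) ℝ :=
      !![2 * b ^ 2 + α * a ^ 2, -(ω * (2 + α) / α);
         -(ω * (2 + α) / α), 2 * a ^ 2 + α * b ^ 2]
    let μ : ℝ := 2 * ω * (α + 2) /
      (α * ((α - 2) * Real.sqrt (1 - 4 * ω ^ 2 / α ^ 2) +
        Real.sqrt ((α - 2) ^ 2 + 32 * ω ^ 2 / α)))
    let lm : ℝ := 1 / 2 * ((α + 2) - Real.sqrt ((α - 2) ^ 2 + 32 * ω ^ 2 / α))
    0 < μ ∧ A.mulVec ![1, μ] = lm • ![1, μ] :=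
  stmt_18_general α ω a b hα hω ha hab h1 h2
end
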